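/- arXiv:2308.16133 — 4 statements merged into one kernel-verified Lean document; each statement's English description precedes it below -/
import Mathlib

section
/- Let K be an algebraically closed field and F(x,y) an irreducible non-constant polynomial over K. If there are infinitely many points (a,b) in K^2 with F(a,b) = 0 and ∂F/∂y(a,b) = 0, then F(x,y) = G(x, y^p) for some polynomial G, where p = char(K) > 0 (and if char(K) = 0, then F depends only on x). -/
open Polynomial

noncomputable section StmtAux

variable {K : Type*} [Field K]

/-- The map sending `X 0 ↦ C X`, `X 1 ↦ X`. -/
noncomputable def psiAux (K : Type*) [Field K] :
    MvPolynomial (Fin 2) K →ₐ[K] Polynomial (Polynomial K) :=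
  MvPolynomial.aeval ![Polynomial.C Polynomial.X, Polynomial.X]

noncomputable def thetaAux (K : Type*) [Field K] :
    Polynomial (Polynomial K) →ₐ[K] MvPolynomial (Fin 2) K :=
  Polynomial.aevalTower (Polynomial.aeval (MvPolynomial.X 0)) (MvPolynomial.X 1)

@[simp] lemma psiAux_X0 : psiAux K (MvPolynomial.X 0) = Polynomial.C Polynomial.X := by
  simp [psiAux]

@[simp] lemma psiAux_X1 : psiAux K (MvPolynomial.X 1) = Polynomial.X := by
  simp [psiAux]

@[simp] lemma thetaAux_C (s : Polynomial K) :
    thetaAux K (Polynomial.C s) = Polynomial.aeval (MvPolynomial.X 0) s :=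
  Polynomial.aevalTower_C _ _ _

@[simp] lemma thetaAux_X : thetaAux K (Polynomial.X) = MvPolynomial.X 1 :=
  Polynomial.aevalTower_X _ _

lemma psiAux_aevalX0 (s : Polynomial K) :
    psiAux K (Polynomial.aeval (MvPolynomial.X 0) s) = Polynomial.C s := by
  have h : (psiAux K).comp (Polynomial.aeval (MvPolynomial.X 0 : MvPolynomial (Fin 2) K))
      = Polynomial.CAlgHom := by
    apply Polynomial.algHom_ext
    simp [Polynomial.CAlgHom]
  calc psiAux K (Polynomial.aeval (MvPolynomial.X 0) s)
      = ((psiAux K).comp (Polynomial.aeval (MvPolynomial.X 0 : MvPolynomial (Fin 2) K))) s := rfl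
    _ = Polynomial.C s := by rw [h]; rfl

lemma thetaAux_psiAux (F : MvPolynomial (Fin 2) K) : thetaAux K (psiAux K F) = F := by
  induction F using MvPolynomial.induction_on with
  | C a => simp [psiAux, thetaAux]
  | add p q hp hq => simp [map_add, hp, hq]
  | mul_X p i hp =>
    rw [map_mul, map_mul, hp]
    fin_cases i <;> simp

lemma psiAux_thetaAux (q : Polynomial (Polynomial K)) : psiAux K (thetaAux K q) = q := by
  induction q using Polynomial.induction_on' with
  | add p q hp hq => simp [map_add, hp, hq]
  | monomial n a =>
    rw [← Polynomial.C_mul_X_pow_eq_monomial, map_mul, map_mul, map_pow, map_pow,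
      thetaAux_C, thetaAux_X, psiAux_aevalX0, psiAux_X1]

/-- The algebra equivalence between `MvPolynomial (Fin 2) K` and `(K[x])[y]`. -/
noncomputable def eeAux (K : Type*) [Field K] :
    MvPolynomial (Fin 2) K ≃ₐ[K] Polynomial (Polynomial K) :=
  AlgEquiv.ofAlgHom (psiAux K) (thetaAux K)
    (AlgHom.ext (psiAux_thetaAux)) (AlgHom.ext (thetaAux_psiAux))

lemma psiAux_pderiv (F : MvPolynomial (Fin 2) K) :
    psiAux K (MvPolynomial.pderiv 1 F) = Polynomial.derivative (psiAux K F) := by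
  induction F using MvPolynomial.induction_on with
  | C a => simp [psiAux]
  | add p q hp hq => simp [map_add, hp, hq]
  | mul_X p i hp =>
    rw [MvPolynomial.pderiv_mul, map_add, map_mul, map_mul, hp, map_mul, derivative_mul]
    fin_cases i <;> simp [MvPolynomial.pderiv_X_self, MvPolynomial.pderiv_X_of_ne]

lemma psiAux_eval (F : MvPolynomial (Fin 2) K) (a b : K) :
    Polynomial.eval b ((psiAux K F).map (Polynomial.evalRingHom a))
      = MvPolynomial.eval ![a, b] F := by
  induction F using MvPolynomial.induction_on with
  | C c => simp [psiAux]
  | add p q hp hq => simp [map_add, Polynomial.map_add, hp, hq]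
  | mul_X p i hp =>
    rw [map_mul, Polynomial.map_mul, Polynomial.eval_mul, hp, map_mul]
    fin_cases i <;> simp

lemma thetaAux_expand (n : ℕ) (r : Polynomial (Polynomial K)) :
    thetaAux K (Polynomial.expand (Polynomial K) n r)
      = MvPolynomial.aeval
          (fun i : Fin 2 => if i = 0 then MvPolynomial.X 0
            else (MvPolynomial.X 1 : MvPolynomial (Fin 2) K) ^ n) (thetaAux K r) := by
  induction r using Polynomial.induction_on' with
  | add p q hp hq => simp [map_add, hp, hq]
  | monomial m a =>
    have haux : ∀ s : Polynomial K,
        MvPolynomial.aeval (R := K)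
          (fun i : Fin 2 => if i = 0 then MvPolynomial.X 0
            else (MvPolynomial.X 1 : MvPolynomial (Fin 2) K) ^ n)
          (Polynomial.aeval (MvPolynomial.X 0) s) = Polynomial.aeval (MvPolynomial.X 0) s := by
      intro s
      have h : (MvPolynomial.aeval (R := K)
          (fun i : Fin 2 => if i = 0 then MvPolynomial.X 0
            else (MvPolynomial.X 1 : MvPolynomial (Fin 2) K) ^ n)).comp
            (Polynomial.aeval (MvPolynomial.X 0 : MvPolynomial (Fin 2) K))
          = Polynomial.aeval (MvPolynomial.X 0 : MvPolynomial (Fin 2) K) := by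
        apply Polynomial.algHom_ext
        simp
      calc _ = ((MvPolynomial.aeval (R := K)
          (fun i : Fin 2 => if i = 0 then MvPolynomial.X 0
            else (MvPolynomial.X 1 : MvPolynomial (Fin 2) K) ^ n)).comp
            (Polynomial.aeval (MvPolynomial.X 0 : MvPolynomial (Fin 2) K))) s := rfl
        _ = _ := by rw [h]
    rw [Polynomial.expand_monomial, ← Polynomial.C_mul_X_pow_eq_monomial,
      ← Polynomial.C_mul_X_pow_eq_monomial, map_mul, map_mul, map_pow, map_pow,
      thetaAux_C, thetaAux_X, map_mul, map_pow, haux]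
    simp [pow_mul, mul_comm m n]

end StmtAux

theorem stmt1 {K : Type*} [Field K] [IsAlgClosed K]
    (F : MvPolynomial (Fin 2) K) (hirr : Irreducible F) (hconst : F.totalDegree ≠ 0)
    (hinf : {ab : K × K |
        MvPolynomial.eval ![ab.1, ab.2] F = 0 ∧
        MvPolynomial.eval ![ab.1, ab.2] (MvPolynomial.pderiv 1 F) = 0}.Infinite) :
    (ringChar K = 0 →
      ∃ g : Polynomial K, F = Polynomial.aeval (MvPolynomial.X 0 : MvPolynomial (Fin 2) K) g) ∧
    (ringChar K ≠ 0 →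
      ∃ G : MvPolynomial (Fin 2) K,
        F = MvPolynomial.aeval
          (fun i : Fin 2 => if i = 0 then MvPolynomial.X 0
            else (MvPolynomial.X 1 : MvPolynomial (Fin 2) K) ^ (ringChar K)) G) := by
  classical
  have hder : MvPolynomial.pderiv 1 F = 0 := by
    by_contra hP0
    set q : Polynomial (Polynomial K) := psiAux K F with hq
    have hq_irr : Irreducible q := by
      have : Irreducible ((eeAux K) F) :=
        (MulEquiv.irreducible_iff (eeAux K).toMulEquiv).mpr hirr
      exact this
    have hd : Polynomial.derivative q ≠ 0 := by
      rw [hq, ← psiAux_pderiv]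
      intro h
      apply hP0
      have := congrArg (thetaAux K) h
      rwa [thetaAux_psiAux, map_zero] at this
    have hq0 : q ≠ 0 := by
      intro h
      rw [h] at hd
      simp at hd
    have hdeg : 0 < q.natDegree := by
      rcases Nat.eq_zero_or_pos q.natDegree with h | h
      · exact absurd (by rw [Polynomial.eq_C_of_natDegree_eq_zero h]; simp) hd
      · exact h
    have hprim : q.IsPrimitive := by
      intro r hr
      obtain ⟨g, hg⟩ := hr
      rcases hq_irr.isUnit_or_isUnit hg with h | h
      · exact Polynomial.isUnit_C.mp h
      · exfalso
        have h1 : g.natDegree = 0 := Polynomial.natDegree_eq_zero_of_isUnit h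
        have h2 := Polynomial.natDegree_mul_le (p := Polynomial.C r) (q := g)
        rw [← hg] at h2
        simp [Polynomial.natDegree_C, h1] at h2
        omega
    set L := FractionRing (Polynomial K)
    have φinj : Function.Injective (algebraMap (Polynomial K) L) :=
      IsFractionRing.injective _ _
    set fm : Polynomial L := q.map (algebraMap (Polynomial K) L) with hfm
    have hfm_irr : Irreducible fm :=
      (hprim.irreducible_iff_irreducible_map_fraction_map).1 hq_irr
    have hfm0 : fm ≠ 0 := hfm_irr.ne_zero
    have hgm : (Polynomial.derivative q).map (algebraMap (Polynomial K) L)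
        = Polynomial.derivative fm := (Polynomial.derivative_map q _).symm
    have hgm0 : Polynomial.derivative fm ≠ 0 := by
      rw [← hgm]
      exact (Polynomial.map_ne_zero_iff φinj).2 hd
    have hnd : ¬ fm ∣ Polynomial.derivative fm := fun hdvd =>
      absurd (Polynomial.degree_le_of_dvd hdvd hgm0)
        (not_le.2 (Polynomial.degree_derivative_lt hfm0))
    have hcop : IsCoprime fm (Polynomial.derivative fm) :=
      (EuclideanDomain.dvd_or_coprime _ _ hfm_irr).resolve_left hnd
    obtain ⟨u, v, huv⟩ := hcop
    obtain ⟨c, hc⟩ := IsLocalization.integerNormalization_map_to_map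
      (nonZeroDivisors (Polynomial K)) u
    obtain ⟨d, hdd⟩ := IsLocalization.integerNormalization_map_to_map
      (nonZeroDivisors (Polynomial K)) v
    set U := IsLocalization.integerNormalization (nonZeroDivisors (Polynomial K)) u with hU
    set V := IsLocalization.integerNormalization (nonZeroDivisors (Polynomial K)) v with hV
    have hsmul : ∀ (x : Polynomial K) (w : Polynomial L),
        x • w = Polynomial.C (algebraMap (Polynomial K) L x) * w := by
      intro x w
      ext n
      simp [Polynomial.coeff_smul, Polynomial.coeff_C_mul, Algebra.smul_def]
    have key : (Polynomial.C (d : Polynomial K) * U) * q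
        + (Polynomial.C (c : Polynomial K) * V) * Polynomial.derivative q
        = Polynomial.C ((c : Polynomial K) * (d : Polynomial K)) := by
      apply Polynomial.map_injective _ φinj
      rw [Polynomial.map_add, Polynomial.map_mul, Polynomial.map_mul, Polynomial.map_mul,
        Polynomial.map_mul, hc, hdd, Polynomial.map_C, Polynomial.map_C, Polynomial.map_C,
        hsmul, hsmul, hgm, map_mul, Polynomial.C_mul]
      linear_combination (Polynomial.C (algebraMap (Polynomial K) L c)
        * Polynomial.C (algebraMap (Polynomial K) L d)) * huv
    have hcd0 : (c : Polynomial K) * (d : Polynomial K) ≠ 0 :=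
      mul_ne_zero (mem_nonZeroDivisors_iff_ne_zero.mp c.2)
        (mem_nonZeroDivisors_iff_ne_zero.mp d.2)
    have hpa : ∀ a : K, q.map (Polynomial.evalRingHom a) ≠ 0 := by
      intro a h0
      have hdvd : Polynomial.C (Polynomial.X - Polynomial.C a) ∣ q := by
        rw [Polynomial.C_dvd_iff_dvd_coeff]
        intro j
        rw [Polynomial.dvd_iff_isRoot]
        have := congrArg (fun w => Polynomial.coeff w j) h0
        simpa [Polynomial.coeff_map] using this
      obtain ⟨g, hg⟩ := hdvd
      rcases hq_irr.isUnit_or_isUnit hg with h | h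
      · exact Polynomial.not_isUnit_X_sub_C a (Polynomial.isUnit_C.mp h)
      · have h1 : g.natDegree = 0 := Polynomial.natDegree_eq_zero_of_isUnit h
        have h2 := Polynomial.natDegree_mul_le (p := Polynomial.C (Polynomial.X - Polynomial.C a))
          (q := g)
        rw [← hg] at h2
        simp [Polynomial.natDegree_C, h1] at h2
        omega
    have hsub : {ab : K × K |
        MvPolynomial.eval ![ab.1, ab.2] F = 0 ∧
        MvPolynomial.eval ![ab.1, ab.2] (MvPolynomial.pderiv 1 F) = 0} ⊆
        ⋃ a ∈ {x : K | ((c : Polynomial K) * (d : Polynomial K)).IsRoot x},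
          (fun b => (a, b)) '' {b : K | (q.map (Polynomial.evalRingHom a)).IsRoot b} := by
      rintro ⟨a, b⟩ ⟨h1, h2⟩
      have e1 : Polynomial.eval b (q.map (Polynomial.evalRingHom a)) = 0 := by
        rw [hq, psiAux_eval]; exact h1
      have e2 : Polynomial.eval b ((Polynomial.derivative q).map (Polynomial.evalRingHom a))
          = 0 := by
        rw [hq, ← psiAux_pderiv, psiAux_eval]; exact h2
      have e3 : ((c : Polynomial K) * (d : Polynomial K)).IsRoot a := by
        have := congrArg (fun w => Polynomial.eval b (w.map (Polynomial.evalRingHom a))) key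
        simp only [Polynomial.map_add, Polynomial.map_mul, Polynomial.eval_add,
          Polynomial.eval_mul, e1, e2, Polynomial.map_C, Polynomial.eval_C, mul_zero,
          add_zero, zero_add] at this
        simpa [Polynomial.IsRoot] using this.symm
      exact Set.mem_biUnion e3 ⟨b, e1, rfl⟩
    have hfin : (⋃ a ∈ {x : K | ((c : Polynomial K) * (d : Polynomial K)).IsRoot x},
        (fun b => (a, b)) '' {b : K | (q.map (Polynomial.evalRingHom a)).IsRoot b}).Finite :=
      Set.Finite.biUnion (Polynomial.finite_setOf_isRoot hcd0)
        (fun a _ => (Polynomial.finite_setOf_isRoot (hpa a)).image _)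
    exact (hinf.mono hsub) hfin
  have hdq : Polynomial.derivative (psiAux K F) = 0 := by
    rw [← psiAux_pderiv, hder, map_zero]
  constructor
  · intro hchar0
    haveI : CharP K 0 := hchar0 ▸ ringChar.charP K
    haveI : CharZero K := CharP.charP_to_charZero K
    have h0 : (psiAux K F).natDegree = 0 :=
      Polynomial.natDegree_eq_zero_of_derivative_eq_zero hdq
    refine ⟨(psiAux K F).coeff 0, ?_⟩
    have hr : psiAux K F = Polynomial.C ((psiAux K F).coeff 0) :=
      Polynomial.eq_C_of_natDegree_eq_zero h0
    have := congrArg (thetaAux K) hr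
    rw [thetaAux_psiAux, thetaAux_C] at this
    exact this
  · intro hcharne
    haveI : CharP K (ringChar K) := ringChar.charP K
    haveI : CharP (Polynomial K) (ringChar K) := Polynomial.instCharP _
    have hexp : Polynomial.expand (Polynomial K) (ringChar K)
        (Polynomial.contract (ringChar K) (psiAux K F)) = psiAux K F :=
      Polynomial.expand_contract (ringChar K) hdq hcharne
    refine ⟨thetaAux K (Polynomial.contract (ringChar K) (psiAux K F)), ?_⟩
    conv_lhs => rw [← thetaAux_psiAux (K := K) F, ← hexp]
    rw [thetaAux_expand]
end

section
/- Let K be an algebraically closed field and F(x,y) an irreducible polynomial with vanishing set V ⊆ K^2. Then there exists a finite subset E of V such that either ∂F/∂x(a) ≠ 0 for all a ∈ V \ E, or ∂F/∂y(a) ≠ 0 for all a ∈ V \ E. -/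
/-!
Some partial derivative `∂F/∂xᵢ` is a nonzero polynomial: otherwise every exponent occurring in
`F` vanishes in `K`, so `F` is a constant (characteristic `0`) or a `p`-th power (characteristic
`p`, `K` perfect), and neither is irreducible. As `∂F/∂xᵢ` has smaller degree in `xᵢ`, `F` does
not divide it, so it suffices that an irreducible `F` and a `G` not divisible by `F` have finitely
many common zeros. By Gauss's lemma `F` and `G` are coprime over `K(x)[y]`; clearing denominators
gives `F P + G Q = r(x)` with `r ≠ 0`, so common zeros lie over the finitely many roots of `r`.
Over each such `x₀` one of `F(x₀, ·)`, `G(x₀, ·)` is nonzero, since otherwise `x - x₀` would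
divide both `F` and `G`, forcing `F ∣ G`.
-/

open Polynomial Bivariate

namespace MvPolynomial

variable {σ R : Type*}

lemma natCast_apply_eq_zero_of_pderiv_eq_zero [CommSemiring R] [NoZeroDivisors R]
    {F : MvPolynomial σ R} {i : σ} (h : pderiv i F = 0) {m : σ →₀ ℕ} (hm : m ∈ F.support) :
    (m i : R) = 0 := by
  classical
  rcases Nat.eq_zero_or_pos (m i) with hmi | hmi
  · simp [hmi]
  have hm' : m - Finsupp.single i 1 + Finsupp.single i 1 = m :=
    tsub_add_cancel_of_le (Finsupp.single_le_iff.mpr hmi)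
  have := coeff_pderiv (i := i) F (m - Finsupp.single i 1)
  rw [h, coeff_zero, hm', Finsupp.tsub_apply, Finsupp.single_eq_same] at this
  rw [← Nat.sub_add_cancel hmi]
  exact_mod_cast (mul_eq_zero.mp this.symm).resolve_left (mem_support_iff.mp hm)

lemma eq_C_of_forall_pderiv_eq_zero [CommSemiring R] [NoZeroDivisors R] [CharZero R]
    {F : MvPolynomial σ R} (h : ∀ i, pderiv i F = 0) : F = C (coeff 0 F) := by
  classical
  ext m
  rw [coeff_C]
  split_ifs with hm
  · rw [hm]
  by_contra hFm
  obtain ⟨i, hi⟩ : ∃ i, m i ≠ 0 := by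
    by_contra! h0
    exact hm (Finsupp.ext h0).symm
  exact hi (Nat.cast_eq_zero.mp
    (natCast_apply_eq_zero_of_pderiv_eq_zero (h i) (mem_support_iff.mpr hFm)))

lemma exists_pow_eq_of_forall_pderiv_eq_zero [CommRing R] [IsDomain R] (p : ℕ) [Fact p.Prime]
    [CharP R p] [PerfectRing R p] {F : MvPolynomial σ R} (h : ∀ i, pderiv i F = 0) :
    ∃ G : MvPolynomial σ R, G ^ p = F := by
  have hdvd : ∀ m ∈ F.support, ∀ i, p ∣ m i := fun m hm i =>
    (CharP.cast_eq_zero_iff R p _).mp (natCast_apply_eq_zero_of_pderiv_eq_zero (h i) hm)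
  refine ⟨∑ m ∈ F.support, monomial (Finsupp.mapRange (· / p) (Nat.zero_div p) m)
    ((frobeniusEquiv R p).symm (coeff m F)), ?_⟩
  rw [sum_pow_char]
  conv_rhs => rw [← support_sum_monomial_coeff F]
  refine Finset.sum_congr rfl fun m hm => ?_
  rw [monomial_pow, frobeniusEquiv_symm_pow_p]
  congr 2
  ext j
  simpa using Nat.mul_div_cancel' (hdvd m hm j)

theorem exists_pderiv_ne_zero_of_irreducible {K : Type*} [Field K] [PerfectField K]
    {F : MvPolynomial σ K} (hF : Irreducible F) : ∃ i, pderiv i F ≠ 0 := by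
  by_contra! h
  obtain ⟨q, hq⟩ := ExpChar.exists K
  cases hq with
  | zero =>
    rw [eq_C_of_forall_pderiv_eq_zero h] at hF
    exact hF.not_isUnit ((isUnit_iff_ne_zero.mpr (by simpa using hF.ne_zero)).map C)
  | prime hq =>
    have := Fact.mk hq
    obtain ⟨G, rfl⟩ := exists_pow_eq_of_forall_pderiv_eq_zero q h
    exact not_irreducible_pow hq.ne_one hF

lemma degreeOf_pderiv_lt [CommSemiring R] {F : MvPolynomial σ R} {i : σ} (h : pderiv i F ≠ 0) :
    degreeOf i (pderiv i F) < degreeOf i F := by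
  classical
  have hle : ∀ m ∈ (pderiv i F).support, m i + 1 ≤ degreeOf i F := fun m hm => by
    have hmem : m + Finsupp.single i 1 ∈ F.support := by
      rw [mem_support_iff, coeff_pderiv] at hm
      exact mem_support_iff.mpr (left_ne_zero_of_mul hm)
    simpa using monomial_le_degreeOf i hmem
  obtain ⟨m, hm⟩ := support_nonempty.mpr h
  have hpos : 0 < degreeOf i F := by have := hle m hm; omega
  exact (degreeOf_lt_iff hpos).mpr fun m hm => by have := hle m hm; omega

lemma not_dvd_pderiv [CommRing R] [IsDomain R] {F : MvPolynomial σ R} {i : σ}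
    (h : pderiv i F ≠ 0) : ¬ F ∣ pderiv i F := by
  rintro ⟨G, hG⟩
  have hF : F ≠ 0 := by rintro rfl; simp_all
  have hG0 : G ≠ 0 := by rintro rfl; simp_all
  have := degreeOf_pderiv_lt h
  rw [hG, degreeOf_mul_eq hF hG0] at this
  omega

end MvPolynomial

namespace Polynomial

lemma isCoprime_map_of_irreducible_of_not_dvd {R L : Type*} [CommRing R] [IsDomain R]
    [IsGCDMonoid R] [Field L] [Algebra R L] [IsFractionRing R L] {f g : R[X]}
    (hf : Irreducible f) (hfg : ¬ f ∣ g) :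
    IsCoprime (f.map (algebraMap R L)) (g.map (algebraMap R L)) := by
  by_cases hdeg : f.natDegree = 0
  · have hunit : IsUnit (f.map (algebraMap R L)) := by
      rw [eq_C_of_natDegree_eq_zero hdeg, map_C, isUnit_C, isUnit_iff_ne_zero,
        map_ne_zero_iff _ (IsFractionRing.injective R L)]
      rintro h0
      exact hf.ne_zero (by rw [eq_C_of_natDegree_eq_zero hdeg, h0, C_0])
    exact ⟨↑hunit.unit⁻¹, 0, by simp⟩
  have hprim := hf.isPrimitive hdeg
  exact ((hprim.irreducible_iff_irreducible_map_fraction_map.mp hf).coprime_iff_not_dvd).mpr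
    fun h => hfg (hprim.dvd_of_fraction_map_dvd_fraction_map h)

lemma C_X_sub_C_dvd_iff_map_evalRingHom_eq_zero {R : Type*} [CommRing R] (p : R[X][Y]) (x : R) :
    C (X - C x) ∣ p ↔ p.map (evalRingHom x) = 0 := by
  rw [C_dvd_iff_dvd_coeff, Polynomial.ext_iff]
  simp only [dvd_iff_isRoot, IsRoot.def, coeff_map, coe_evalRingHom, coeff_zero]

lemma map_evalRingHom_ne_zero_or {K : Type*} [Field K] {f g : K[X][Y]} (hf : Irreducible f)
    (hfg : ¬ f ∣ g) (x : K) : f.map (evalRingHom x) ≠ 0 ∨ g.map (evalRingHom x) ≠ 0 := by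
  by_contra! h
  obtain ⟨w, hfw⟩ := (C_X_sub_C_dvd_iff_map_evalRingHom_eq_zero f x).mpr h.1
  have hw : IsUnit w := (hf.isUnit_or_isUnit hfw).resolve_left
    fun hu => not_isUnit_X_sub_C x (isUnit_C.mp hu)
  have hfX : f ∣ C (X - C x) := by
    rw [hfw]
    exact (associated_mul_unit_right _ _ hw).symm.dvd
  exact hfg (hfX.trans ((C_X_sub_C_dvd_iff_map_evalRingHom_eq_zero g x).mpr h.2))

lemma exists_mul_add_mul_eq_C_of_isCoprime_map {R L : Type*} [CommRing R] [IsDomain R] [Field L]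
    [Algebra R L] [IsFractionRing R L] {f g : R[X]}
    (h : IsCoprime (f.map (algebraMap R L)) (g.map (algebraMap R L))) :
    ∃ p q : R[X], ∃ r : R, r ≠ 0 ∧ f * p + g * q = C r := by
  have hinj := IsFractionRing.injective R L
  by_cases hdeg : f.natDegree = 0 ∧ g.natDegree = 0
  · rw [eq_C_of_natDegree_eq_zero hdeg.1, eq_C_of_natDegree_eq_zero hdeg.2] at h ⊢
    by_cases hf : f.coeff 0 = 0
    · refine ⟨0, 1, g.coeff 0, fun hg => ?_, by simp⟩
      simp [hf, hg, not_isCoprime_zero_zero] at h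
    · exact ⟨1, 0, f.coeff 0, hf, by simp⟩
  obtain ⟨p, q, -, -, hpq⟩ :=
    exists_mul_add_mul_eq_C_resultant f g le_rfl le_rfl (by tauto)
  refine ⟨p, q, _, fun hres => ?_, hpq⟩
  apply resultant_ne_zero _ _ h
  rw [natDegree_map_eq_of_injective hinj, natDegree_map_eq_of_injective hinj, resultant_map_map,
    hres, map_zero]

theorem finite_setOf_evalEval_eq_zero {K : Type*} [Field K] {f g : K[X][Y]}
    (hf : Irreducible f) (hfg : ¬ f ∣ g) :
    {xy : K × K | f.evalEval xy.1 xy.2 = 0 ∧ g.evalEval xy.1 xy.2 = 0}.Finite := by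
  obtain ⟨p, q, r, hr, hpq⟩ := exists_mul_add_mul_eq_C_of_isCoprime_map
    (isCoprime_map_of_irreducible_of_not_dvd (L := FractionRing K[X]) hf hfg)
  refine Set.Finite.of_finite_fibers Prod.fst
    ((finite_setOfPred_isRoot hr).subset ?_) fun x _ => ?_
  · rintro _ ⟨⟨x, y⟩, ⟨hfxy, hgxy⟩, rfl⟩
    have := congrArg (evalEval x y) hpq
    rwa [evalEval_add, evalEval_mul, evalEval_mul, hfxy, hgxy, evalEval_C, zero_mul, zero_mul,
      add_zero, eq_comm] at this
  · have hroots :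
        {y | (f.map (evalRingHom x)).IsRoot y ∧ (g.map (evalRingHom x)).IsRoot y}.Finite := by
      rcases map_evalRingHom_ne_zero_or hf hfg x with h | h
      exacts [(finite_setOfPred_isRoot h).subset fun y hy => hy.1,
        (finite_setOfPred_isRoot h).subset fun y hy => hy.2]
    refine (hroots.image (Prod.mk x)).subset ?_
    rintro ⟨x', y⟩ ⟨hxy, rfl : x' = x⟩
    refine ⟨y, ?_, rfl⟩
    simpa only [Set.mem_ofPred_eq, IsRoot.def, map_evalRingHom_eval] using hxy

lemma Bivariate.eval_equivMvPolynomial {R : Type*} [CommRing R] (p : R[X][Y]) (x y : R) :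
    MvPolynomial.eval ![x, y] (equivMvPolynomial R p) = p.evalEval x y := by
  change ((MvPolynomial.eval ![x, y]).comp (equivMvPolynomial R).toRingHom) p =
    evalEvalRingHom x y p
  congr 1
  ext <;> simp

end Polynomial

theorem MvPolynomial.finite_setOf_eval_eq_zero {K : Type*} [Field K]
    {F G : MvPolynomial (Fin 2) K} (hF : Irreducible F) (hFG : ¬ F ∣ G) :
    {a : K × K | eval ![a.1, a.2] F = 0 ∧ eval ![a.1, a.2] G = 0}.Finite := by
  obtain ⟨f, rfl⟩ := (equivMvPolynomial K).surjective F
  obtain ⟨g, rfl⟩ := (equivMvPolynomial K).surjective G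
  simpa only [eval_equivMvPolynomial] using finite_setOf_evalEval_eq_zero
    ((MulEquiv.irreducible_iff (equivMvPolynomial K)).mp hF) ((map_dvd_iff _).not.mp hFG)

theorem stmt2 {K : Type*} [Field K] [IsAlgClosed K]
    (F : MvPolynomial (Fin 2) K) (hirr : Irreducible F)
    (V : Set (K × K)) (hV : V = {ab : K × K | MvPolynomial.eval ![ab.1, ab.2] F = 0}) :
    ∃ E : Set (K × K), E ⊆ V ∧ E.Finite ∧
      ((∀ a ∈ V \ E, MvPolynomial.eval ![a.1, a.2] (MvPolynomial.pderiv 0 F) ≠ 0) ∨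
       (∀ a ∈ V \ E, MvPolynomial.eval ![a.1, a.2] (MvPolynomial.pderiv 1 F) ≠ 0)) := by
  obtain ⟨i, hi⟩ := MvPolynomial.exists_pderiv_ne_zero_of_irreducible hirr
  let E := {a ∈ V | MvPolynomial.eval ![a.1, a.2] (MvPolynomial.pderiv i F) = 0}
  have hE : ∀ a ∈ V \ E, MvPolynomial.eval ![a.1, a.2] (MvPolynomial.pderiv i F) ≠ 0 :=
    fun a ⟨ha, haE⟩ h => haE ⟨ha, h⟩
  refine ⟨E, fun a ha => ha.1, ?_, ?_⟩
  · simp only [E, hV]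
    exact MvPolynomial.finite_setOf_eval_eq_zero hirr (MvPolynomial.not_dvd_pderiv hi)
  · fin_cases i
    exacts [Or.inl hE, Or.inr hE]
end

section
/- Let K be an algebraically closed field, and let V, W ⊆ K^2 be the zero sets of polynomials F and G respectively, where F and G have no common non-constant divisor. Then V ∩ W is finite and has at most deg(F)·deg(G) points. -/
/-!
Write `m, n` for the degrees of `F, G`, `P_d` for the polynomials of degree `≤ d` and
`N(d) = dim P_d = (d + 1)(d + 2) / 2`. Let `S` be a finite set of common zeros and `e ≥ #S`.
The map `P_{n+e} × P_{m+e} → P_{m+n+e}`, `(a, b) ↦ aF + bG`, has kernel `{(cG, -cF) | c ∈ P_e}`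
because `F` and `G` are coprime, and its image vanishes on `S`. Evaluation on `S` is onto from
`P_{m+n+e}` (interpolation by products of linear forms), so
`N(n+e) + N(m+e) - N(e) ≤ N(m+n+e) - #S`. The second difference of `N` gives `#S ≤ mn`.
-/

open Finset

theorem Set.finite_and_ncard_le_of_forall_finset_card_le {α : Type*} {s : Set α} {B : ℕ}
    (h : ∀ t : Finset α, ↑t ⊆ s → #t ≤ B) : s.Finite ∧ s.ncard ≤ B := by
  have hs : s.Finite := by
    by_contra hs
    obtain ⟨t, hts, ht⟩ := Set.Infinite.exists_subset_card_eq hs (B + 1)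
    have := h t hts
    omega
  exact ⟨hs, by simpa [Set.ncard_eq_toFinset_card s hs] using h hs.toFinset (by simp)⟩

namespace MvPolynomial

variable {σ K : Type*} [Field K]

/-- Homogenisation: the new variable `none` carries the missing degree `d - s.degree`. -/
noncomputable def degreeLeEquivFinsuppAntidiag [Fintype σ] [DecidableEq σ] (d : ℕ) :
    {s : σ →₀ ℕ | (s.sum fun _ e => e) ≤ d} ≃ (univ : Finset (Option σ)).finsuppAntidiag d where
  toFun s := ⟨s.1.optionElim (d - s.1.degree), by
    have hs : s.1.degree ≤ d := s.2
    simp only [Set.mem_ofPred_eq, mem_finsuppAntidiag, Finsupp.optionElim_apply_eq_elim,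
      Fintype.sum_option, Option.elim_none, Option.elim_some, ← Finsupp.degree_eq_sum,
      subset_univ, and_true]
    omega⟩
  invFun P := ⟨P.1.some, by
    have hP := (mem_finsuppAntidiag.mp P.2).1
    show P.1.some.degree ≤ d
    rw [Fintype.sum_option] at hP
    simp only [Finsupp.degree_eq_sum, Finsupp.some_apply]
    omega⟩
  left_inv s := by simp
  right_inv P := by
    have hP := (mem_finsuppAntidiag.mp P.2).1
    rw [Fintype.sum_option] at hP
    ext1
    convert Finsupp.optionElim_some P.1 using 2
    simp only [Finsupp.degree_eq_sum, Finsupp.some_apply]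
    omega

theorem finrank_restrictTotalDegree [Fintype σ] (d : ℕ) :
    Module.finrank K (restrictTotalDegree σ K d) = (Fintype.card σ + d).choose d := by
  classical
  rw [restrictTotalDegree, Module.finrank_eq_nat_card_basis (basisRestrictSupport K _),
    Nat.card_congr (degreeLeEquivFinsuppAntidiag d), Nat.card_eq_finsetCard,
    card_finsuppAntidiag_nat_eq_choose, card_univ, Fintype.card_option]
  congr 1
  omega

theorem exists_totalDegree_le_one_eval_eq_one_eval_eq_zero {x y : σ → K} (h : x ≠ y) :
    ∃ p : MvPolynomial σ K, p.totalDegree ≤ 1 ∧ eval x p = 1 ∧ eval y p = 0 := by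
  obtain ⟨i, hi⟩ := Function.ne_iff.mp h
  refine ⟨C (x i - y i)⁻¹ * (X i - C (y i)), ?_, ?_, by simp⟩
  · calc _ ≤ (C (x i - y i)⁻¹).totalDegree + (X i - C (y i)).totalDegree := totalDegree_mul _ _
      _ ≤ 0 + 1 := by
        gcongr
        · rw [totalDegree_C]
        · exact (totalDegree_sub_C_le _ _).trans (totalDegree_X _).le
  · simp [inv_mul_cancel₀ (sub_ne_zero.mpr hi)]

theorem exists_totalDegree_le_eval_eq_one_eval_eq_zero {x : σ → K} {S : Finset (σ → K)}
    (hx : x ∉ S) :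
    ∃ p : MvPolynomial σ K, p.totalDegree ≤ #S ∧ eval x p = 1 ∧ ∀ y ∈ S, eval y p = 0 := by
  have h : ∀ y ∈ S, ∃ p : MvPolynomial σ K, p.totalDegree ≤ 1 ∧ eval x p = 1 ∧ eval y p = 0 :=
    fun y hy ↦ exists_totalDegree_le_one_eval_eq_one_eval_eq_zero (ne_of_mem_of_not_mem hy hx).symm
  choose! q hq_deg hq_x hq_y using h
  refine ⟨∏ y ∈ S, q y, ?_, by simp [map_prod, prod_eq_one hq_x], fun y hy ↦ ?_⟩
  · calc _ ≤ ∑ y ∈ S, (q y).totalDegree := totalDegree_finsetProd _ _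
      _ ≤ ∑ _y ∈ S, 1 := sum_le_sum hq_deg
      _ = #S := by simp
  · rw [map_prod]
    exact prod_eq_zero hy (hq_y y hy)

noncomputable def evalOn (S : Finset (σ → K)) (d : ℕ) :
    restrictTotalDegree σ K d →ₗ[K] (S → K) :=
  LinearMap.pi fun x ↦ (aeval (x : σ → K)).toLinearMap ∘ₗ (restrictTotalDegree σ K d).subtype

@[simp]
theorem evalOn_apply (S : Finset (σ → K)) (d : ℕ) (p : restrictTotalDegree σ K d) (x : S) :
    evalOn S d p x = eval (x : σ → K) p := by
  simp [evalOn]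

theorem evalOn_surjective {S : Finset (σ → K)} {d : ℕ} (hS : #S ≤ d + 1) :
    Function.Surjective (evalOn S d) := by
  classical
  rw [← LinearMap.range_eq_top, eq_top_iff, ← (Pi.basisFun K S).span_eq, Submodule.span_le]
  rintro _ ⟨x, rfl⟩
  obtain ⟨p, hp_deg, hp_x, hp_y⟩ :=
    exists_totalDegree_le_eval_eq_one_eval_eq_zero (notMem_erase x.1 S)
  have hp : p ∈ restrictTotalDegree σ K d := by
    rw [mem_restrictTotalDegree, ← Nat.lt_succ_iff]
    exact hp_deg.trans_lt (card_erase_lt_of_mem x.2 |>.trans_le hS)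
  refine ⟨⟨p, hp⟩, ?_⟩
  ext y
  by_cases hyx : y = x
  · subst hyx
    simp [hp_x]
  · simp [hp_y y (mem_erase.mpr ⟨Subtype.coe_ne_coe.mpr hyx, y.2⟩), hyx]

theorem mul_mem_restrictTotalDegree {p q : MvPolynomial σ K} {a b : ℕ}
    (hab : p.totalDegree + a ≤ b) (hq : q ∈ restrictTotalDegree σ K a) :
    p * q ∈ restrictTotalDegree σ K b := by
  rw [mem_restrictTotalDegree] at hq ⊢
  exact (totalDegree_mul p q).trans (by omega)

noncomputable def restrictMulLeft (p : MvPolynomial σ K) {a b : ℕ} (hab : p.totalDegree + a ≤ b) :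
    restrictTotalDegree σ K a →ₗ[K] restrictTotalDegree σ K b :=
  (LinearMap.mulLeft K p).restrict fun _ ↦ mul_mem_restrictTotalDegree hab

@[simp]
theorem coe_restrictMulLeft_apply (p : MvPolynomial σ K) {a b : ℕ} (hab : p.totalDegree + a ≤ b)
    (q : restrictTotalDegree σ K a) : (restrictMulLeft p hab q : MvPolynomial σ K) = p * q :=
  rfl

section Syzygy

variable (F G : MvPolynomial σ K) (e : ℕ)

local notation "m" => F.totalDegree
local notation "n" => G.totalDegree

noncomputable def mulAddMul :
    restrictTotalDegree σ K (n + e) × restrictTotalDegree σ K (m + e) →ₗ[K]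
      restrictTotalDegree σ K (m + n + e) :=
  (restrictMulLeft F (by omega)).coprod (restrictMulLeft G (by omega))

noncomputable def syzygy :
    restrictTotalDegree σ K e →ₗ[K]
      restrictTotalDegree σ K (n + e) × restrictTotalDegree σ K (m + e) :=
  (restrictMulLeft G le_rfl).prod (-restrictMulLeft F le_rfl)

end Syzygy

theorem ker_mulAddMul_le_range_syzygy {F G : MvPolynomial σ K} (e : ℕ) (hG : G ≠ 0) (h : IsRelPrime F G) :
    LinearMap.ker (mulAddMul F G e) ≤ LinearMap.range (syzygy F G e) := by
  rintro ⟨⟨a, ha⟩, ⟨b, hb⟩⟩ hab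
  have hab : F * a + G * b = 0 := congrArg Subtype.val hab
  obtain ⟨c, rfl⟩ : G ∣ a := h.symm.dvd_of_dvd_mul_left ⟨-b, by linear_combination hab⟩
  have hb : b = -(F * c) := mul_left_cancel₀ hG (by linear_combination hab)
  subst hb
  have hc : c ∈ restrictTotalDegree σ K e := by
    rcases eq_or_ne c 0 with rfl | hc
    · exact zero_mem _
    rw [mem_restrictTotalDegree, totalDegree_mul_of_isDomain hG hc] at ha
    rw [mem_restrictTotalDegree]
    omega
  exact ⟨⟨c, hc⟩, rfl⟩

theorem finrank_add_finrank_add_card_le_of_isRelPrime [Finite σ] {F G : MvPolynomial σ K}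
    (hG : G ≠ 0) (h : IsRelPrime F G) {S : Finset (σ → K)}
    (hS : ∀ x ∈ S, eval x F = 0 ∧ eval x G = 0) {e : ℕ}
    (he : #S ≤ F.totalDegree + G.totalDegree + e + 1) :
    Module.finrank K (restrictTotalDegree σ K (G.totalDegree + e)) +
        Module.finrank K (restrictTotalDegree σ K (F.totalDegree + e)) + #S ≤
      Module.finrank K (restrictTotalDegree σ K (F.totalDegree + G.totalDegree + e)) +
        Module.finrank K (restrictTotalDegree σ K e) := by
  have hrange : LinearMap.range (mulAddMul F G e) ≤ LinearMap.ker (evalOn S _) := by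
    rintro _ ⟨⟨a, b⟩, rfl⟩
    ext x
    simp [mulAddMul, (hS x x.2).1, (hS x x.2).2]
  have hker : Module.finrank K (LinearMap.ker (mulAddMul F G e)) ≤
      Module.finrank K (restrictTotalDegree σ K e) :=
    (Submodule.finrank_mono (ker_mulAddMul_le_range_syzygy e hG h)).trans
      (LinearMap.finrank_range_le _)
  have hΦ := (mulAddMul F G e).finrank_range_add_finrank_ker
  have hev := (evalOn S (F.totalDegree + G.totalDegree + e)).finrank_range_add_finrank_ker
  rw [Module.finrank_prod] at hΦ
  rw [LinearMap.range_eq_top.mpr (evalOn_surjective he), finrank_top,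
    Module.finrank_fintype_fun_eq_card, Fintype.card_coe] at hev
  have := Submodule.finrank_mono hrange
  omega

theorem two_mul_choose_add_two (d : ℕ) : 2 * (2 + d).choose d = (d + 1) * (d + 2) := by
  rw [add_comm, Nat.choose_symm_add, Nat.choose_two_right,
    Nat.mul_div_cancel' (Nat.even_mul_pred_self _).two_dvd, mul_comm]
  rfl

theorem card_le_totalDegree_mul_of_isRelPrime {F G : MvPolynomial (Fin 2) K} (hG : G ≠ 0)
    (h : IsRelPrime F G) {S : Finset (Fin 2 → K)} (hS : ∀ x ∈ S, eval x F = 0 ∧ eval x G = 0) :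
    #S ≤ F.totalDegree * G.totalDegree := by
  have key := finrank_add_finrank_add_card_le_of_isRelPrime hG h hS (e := #S) (by omega)
  simp only [finrank_restrictTotalDegree, Fintype.card_fin] at key
  have hN := two_mul_choose_add_two
  nlinarith [hN #S, hN (G.totalDegree + #S), hN (F.totalDegree + #S),
    hN (F.totalDegree + G.totalDegree + #S)]

theorem finite_and_ncard_commonZeros_le_of_isRelPrime {F G : MvPolynomial (Fin 2) K}
    (h : IsRelPrime F G) :
    {x : Fin 2 → K | eval x F = 0 ∧ eval x G = 0}.Finite ∧
      {x : Fin 2 → K | eval x F = 0 ∧ eval x G = 0}.ncard ≤ F.totalDegree * G.totalDegree := by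
  refine Set.finite_and_ncard_le_of_forall_finset_card_le fun S hS ↦ ?_
  rcases eq_or_ne G 0 with rfl | hG
  · have hF : F ≠ 0 := by
      rintro rfl
      exact not_isRelPrime_zero_zero h
    rw [mul_comm]
    exact card_le_totalDegree_mul_of_isRelPrime hF h.symm fun x hx ↦ (hS hx).symm
  · exact card_le_totalDegree_mul_of_isRelPrime hG h fun x hx ↦ hS hx

end MvPolynomial

theorem stmt17_general {K : Type*} [Field K]
    (F G : MvPolynomial (Fin 2) K)
    (hcd : ∀ d : MvPolynomial (Fin 2) K, d ∣ F → d ∣ G → IsUnit d) :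
    {z : K × K | MvPolynomial.eval ![z.1, z.2] F = 0 ∧
        MvPolynomial.eval ![z.1, z.2] G = 0}.Finite ∧
    {z : K × K | MvPolynomial.eval ![z.1, z.2] F = 0 ∧
        MvPolynomial.eval ![z.1, z.2] G = 0}.ncard ≤ F.totalDegree * G.totalDegree := by
  obtain ⟨hfin, hcard⟩ := MvPolynomial.finite_and_ncard_commonZeros_le_of_isRelPrime hcd
  have hinj := (finTwoArrowEquiv K).symm.injective
  exact ⟨hfin.preimage hinj.injOn,
    (Set.ncard_preimage_of_injective_subset_range hinj
      fun x _ ↦ (finTwoArrowEquiv K).symm.surjective x).trans_le hcard⟩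

theorem stmt17 {K : Type*} [Field K] [IsAlgClosed K]
    (F G : MvPolynomial (Fin 2) K)
    (hcd : ∀ d : MvPolynomial (Fin 2) K, d ∣ F → d ∣ G → IsUnit d) :
    {z : K × K | MvPolynomial.eval ![z.1, z.2] F = 0 ∧
        MvPolynomial.eval ![z.1, z.2] G = 0}.Finite ∧
    {z : K × K | MvPolynomial.eval ![z.1, z.2] F = 0 ∧
        MvPolynomial.eval ![z.1, z.2] G = 0}.ncard ≤ F.totalDegree * G.totalDegree :=
  stmt17_general F G hcd
end

section
/- Let f(x) = ∑_{n≥1} b_n x^n be a power series over a field of characteristic p > 0 converging in a neighborhood of 0 in a complete nonarchimedean field, and for a in the domain let f_a(x) = f(x+a) − f(a) = ∑_{n≥1} b_{n,a} x^n. Let l = min{e ∈ ℕ : ∃ n > 1 with p ∤ n and b_{n p^e} ≠ 0}, assumed to exist. Then for all k < l and all m ≥ 1 with p ∤ m, the coefficient b_{m p^k, a} is independent of a; and the coefficient b_{p^l, a} takes infinitely many values as a varies in any open neighborhood of 0 within the domain of convergence. -/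
/-!
Over a field of characteristic `p`, Frobenius gives `(X + 1) ^ (n * p ^ e) = (X ^ p ^ e + 1) ^ n`,
so `C(n p^e, i)` vanishes in the field unless `p ^ e ∣ i`. For `k < l` every term `j ≠ 0` of
`b_{m p^k, a} = ∑ C(m p^k + j, m p^k) b_{m p^k + j} a^j` is therefore killed either by the binomial
coefficient (when `p^(k+1) ∣ m p^k + j`) or by the minimality of `l`; only `b_{m p^k}` survives.

For `p ^ l`, the same identity gives `C(n p^l, p^l) = n ≠ 0`, so `a ↦ b_{p^l, a}` is a convergent
power series in `a` with a nonzero coefficient in positive degree. If it took only finitely many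
values near `0`, continuity would force it to be locally constant, and the identity theorem would
kill all its coefficients of positive degree.
-/

open Polynomial Filter Topology FormalMultilinearSeries
open scoped NNReal ENNReal

theorem CharP.cast_choose_mul_pow {R : Type*} [CommRing R] (p : ℕ) [Fact p.Prime] [CharP R p]
    (n e i : ℕ) :
    ((n * p ^ e).choose i : R) = if p ^ e ∣ i then (n.choose (i / p ^ e) : R) else 0 := by
  have hexpand : (X + 1 : R[X]) ^ (n * p ^ e) = expand R (p ^ e) ((X + 1) ^ n) := by
    rw [map_pow, map_add, expand_X, map_one, mul_comm, pow_mul, add_pow_char_pow, one_pow]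
  rw [← coeff_X_add_one_pow, hexpand, coeff_expand (pow_pos (Fact.out : p.Prime).pos e),
    coeff_X_add_one_pow]

theorem CharP.cast_choose_mul_pow_pow {R : Type*} [CommRing R] (p : ℕ) [Fact p.Prime]
    [CharP R p] (n e : ℕ) : ((n * p ^ e).choose (p ^ e) : R) = n := by
  rw [CharP.cast_choose_mul_pow p, if_pos dvd_rfl,
    Nat.div_self (pow_pos (Fact.out : p.Prime).pos e), Nat.choose_one_right]

theorem CharP.cast_choose_eq_zero_of_pow_succ_dvd {R : Type*} [CommRing R] (p : ℕ)
    [Fact p.Prime] [CharP R p] {N m k : ℕ} (hN : p ^ (k + 1) ∣ N) (hm : ¬ p ∣ m) :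
    (N.choose (m * p ^ k) : R) = 0 := by
  obtain ⟨n, rfl⟩ := hN
  rw [mul_comm, CharP.cast_choose_mul_pow p, if_neg]
  rwa [pow_succ', Nat.mul_dvd_mul_iff_right (pow_pos (Fact.out : p.Prime).pos k)]

/-- `∑ j, recenteredCoeff b n j * a ^ j` is the coefficient of `x ^ n` in `f (x + a)`,
where `f x = ∑ n, b n * x ^ n`. -/
def recenteredCoeff {R : Type*} [Semiring R] (b : ℕ → R) (n j : ℕ) : R :=
  ((n + j).choose n : R) * b (n + j)

theorem recenteredCoeff_mul_pow_eq_zero {R : Type*} [CommRing R] {p : ℕ} [hp : Fact p.Prime]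
    [CharP R p] {b : ℕ → R} {l k m j : ℕ}
    (hb : ∀ e < l, ∀ n : ℕ, 1 < n → ¬ p ∣ n → b (n * p ^ e) = 0)
    (hk : k < l) (hm : ¬ p ∣ m) (hj : j ≠ 0) : recenteredCoeff b (m * p ^ k) j = 0 := by
  set N := m * p ^ k + j
  have hN : N ≠ 0 := by omega
  rcases lt_or_ge k (N.factorization p) with hkN | hNk
  · rw [recenteredCoeff, CharP.cast_choose_eq_zero_of_pow_succ_dvd p
      ((hp.out.pow_dvd_iff_le_factorization hN).2 hkN) hm, zero_mul]
  · have hm0 : m ≠ 0 := by rintro rfl; exact hm (dvd_zero p)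
    have hpow_lt : p ^ N.factorization p < N := calc
      p ^ N.factorization p ≤ p ^ k := Nat.pow_le_pow_right hp.out.pos hNk
      _ ≤ m * p ^ k := Nat.le_mul_of_pos_left _ (Nat.pos_of_ne_zero hm0)
      _ < N := by omega
    have hq : 1 < N / p ^ N.factorization p :=
      (Nat.lt_div_iff_mul_lt' (Nat.ordProj_dvd N p) 1).2 (by rwa [mul_one])
    have hbN : b N = 0 := by
      rw [← Nat.ordProj_mul_ordCompl_eq_self N p, mul_comm]
      exact hb _ (hNk.trans_lt hk) _ hq (Nat.not_dvd_ordCompl hp.out hN)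
    exact mul_eq_zero_of_right _ hbN

section PowerSeries

variable {K : Type*} [NontriviallyNormedField K]

theorem le_radius_ofScalars_of_summable {c : ℕ → K} {x : K}
    (h : Summable fun n => c n * x ^ n) : (‖x‖₊ : ℝ≥0∞) ≤ (ofScalars K c).radius := by
  refine (ofScalars K c).le_radius_of_tendsto (l := 0) ?_
  have hterms := h.tendsto_atTop_zero.norm
  rw [norm_zero] at hterms
  convert hterms using 2 with n
  rw [ofScalars_norm, norm_mul, norm_pow, coe_nnnorm]

theorem radius_ofScalars_le_radius_recenteredCoeff [IsUltrametricDist K] (b : ℕ → K) (n : ℕ) :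
    (ofScalars K b).radius ≤ (ofScalars K (recenteredCoeff b n)).radius := by
  refine ENNReal.le_of_forall_nnreal_lt fun ρ hρ => ?_
  obtain ⟨C, -, hC⟩ := (ofScalars K b).norm_mul_pow_le_of_lt_radius hρ
  rcases eq_or_ne ρ 0 with rfl | hρ0
  · simp
  refine (ofScalars K (recenteredCoeff b n)).le_radius_of_bound (C / ρ ^ n) fun j => ?_
  have hchoose : ‖((n + j).choose n : K)‖ ≤ 1 := IsUltrametricDist.norm_natCast_le_one K _
  have hb := hC (n + j)
  rw [ofScalars_norm] at hb ⊢
  rw [le_div_iff₀ (by positivity), recenteredCoeff, norm_mul]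
  calc ‖((n + j).choose n : K)‖ * ‖b (n + j)‖ * (ρ : ℝ) ^ j * (ρ : ℝ) ^ n
      ≤ 1 * ‖b (n + j)‖ * (ρ : ℝ) ^ j * (ρ : ℝ) ^ n := by gcongr
    _ = ‖b (n + j)‖ * (ρ : ℝ) ^ (n + j) := by ring
    _ ≤ C := hb

theorem infinite_image_tsum_of_radius_pos [CompleteSpace K] {c : ℕ → K}
    (hc : 0 < (ofScalars K c).radius) {j : ℕ} (hj : j ≠ 0) (hcj : c j ≠ 0) {W : Set K}
    (hW : W ∈ 𝓝 0) : ((fun a => ∑' i, c i * a ^ i) '' W).Infinite := by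
  set f : K → K := fun a => ∑' i, c i * a ^ i
  have hf : HasFPowerSeriesAt f (ofScalars K c) 0 := by
    convert ((ofScalars K c).hasFPowerSeriesOnBall hc).hasFPowerSeriesAt using 1
    exact funext fun a => (ofScalars_sum_eq c a).symm
  intro hfin
  have hconst : ∀ᶠ a in 𝓝 0, f a = f 0 := by
    have hclosed : IsClosed (f '' W \ {f 0}) := hfin.sdiff.isClosed
    filter_upwards [hW, hf.continuousAt.preimage_mem_nhds
      (hclosed.isOpen_compl.mem_nhds fun h => h.2 rfl)] with a haW hfa
    by_contra hne
    exact hfa ⟨⟨a, haW, rfl⟩, hne⟩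
  have hseries : ofScalars K c = constFormalMultilinearSeries K K (f 0) :=
    hf.eq_formalMultilinearSeries (hasFPowerSeriesAt_const.congr (hconst.mono fun _ h => h.symm))
  apply hcj
  rw [← ofScalars_eq_zero K, hseries, constFormalMultilinearSeries_apply_of_nonzero hj]

end PowerSeries

theorem stmt19_general {K : Type*} [NontriviallyNormedField K] [IsUltrametricDist K] [CompleteSpace K]
    (p : ℕ) [Fact p.Prime] [CharP K p]
    (b : ℕ → K) (r : ℝ) (hr : 0 < r)
    (hconv : ∀ x : K, ‖x‖ < r → ∃ S : K, HasSum (fun n => b n * x ^ n) S)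
    (l : ℕ)
    (hlmem : ∃ n : ℕ, 1 < n ∧ ¬ p ∣ n ∧ b (n * p ^ l) ≠ 0)
    (hlmin : ∀ e < l, ∀ n : ℕ, 1 < n → ¬ p ∣ n → b (n * p ^ e) = 0) :
    (∀ k < l, ∀ m : ℕ, 1 ≤ m → ¬ p ∣ m → ∀ a a' : K, ‖a‖ < r → ‖a'‖ < r →
      (∑' j : ℕ, ((m * p ^ k + j).choose (m * p ^ k) : K) * b (m * p ^ k + j) * a ^ j) =
        (∑' j : ℕ, ((m * p ^ k + j).choose (m * p ^ k) : K) * b (m * p ^ k + j) * a' ^ j)) ∧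
    (∀ W : Set K, IsOpen W → (0 : K) ∈ W →
      {t : K | ∃ a : K, a ∈ W ∧ ‖a‖ < r ∧
        t = ∑' j : ℕ, ((p ^ l + j).choose (p ^ l) : K) * b (p ^ l + j) * a ^ j}.Infinite) := by
  refine ⟨fun k hk m _ hm a a' _ _ => ?_, fun W hW hW0 => ?_⟩
  · have hconst (x : K) : ∑' j, recenteredCoeff b (m * p ^ k) j * x ^ j = b (m * p ^ k) := by
      rw [tsum_eq_single 0 fun j hj => by
        rw [recenteredCoeff_mul_pow_eq_zero hlmin hk hm hj, zero_mul]]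
      simp [recenteredCoeff]
    exact (hconst a).trans (hconst a').symm
  · obtain ⟨x, hx0, hxr⟩ := NormedField.exists_norm_lt K hr
    obtain ⟨S, hS⟩ := hconv x hxr
    have hradius : 0 < (ofScalars K (recenteredCoeff b (p ^ l))).radius :=
      (ENNReal.coe_pos.2 (nnnorm_pos.2 (norm_pos_iff.1 hx0))).trans_le
        ((le_radius_ofScalars_of_summable hS.summable).trans
          (radius_ofScalars_le_radius_recenteredCoeff b _))
    obtain ⟨n, hn1, hnp, hbn⟩ := hlmem
    have hcoeff : recenteredCoeff b (p ^ l) ((n - 1) * p ^ l) ≠ 0 := by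
      have hsum : p ^ l + (n - 1) * p ^ l = n * p ^ l := by
        conv_rhs => rw [← Nat.sub_add_cancel hn1.le]
        ring
      rw [recenteredCoeff, hsum, CharP.cast_choose_mul_pow_pow p]
      exact mul_ne_zero ((CharP.cast_eq_zero_iff K p n).not.2 hnp) hbn
    have hne : (n - 1) * p ^ l ≠ 0 :=
      mul_ne_zero (by omega) (pow_ne_zero _ (Fact.out : p.Prime).ne_zero)
    refine (infinite_image_tsum_of_radius_pos hradius hne hcoeff
      (inter_mem (hW.mem_nhds hW0) (Metric.ball_mem_nhds 0 hr))).mono ?_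
    rintro _ ⟨a, ⟨haW, har⟩, rfl⟩
    exact ⟨a, haW, mem_ball_zero_iff.1 har, rfl⟩

theorem stmt19 {K : Type*} [NontriviallyNormedField K] [IsUltrametricDist K] [CompleteSpace K]
    (p : ℕ) [Fact p.Prime] [CharP K p]
    (b : ℕ → K) (hb0 : b 0 = 0) (r : ℝ) (hr : 0 < r)
    (hconv : ∀ x : K, ‖x‖ < r → ∃ S : K, HasSum (fun n => b n * x ^ n) S)
    (l : ℕ)
    (hlmem : ∃ n : ℕ, 1 < n ∧ ¬ p ∣ n ∧ b (n * p ^ l) ≠ 0)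
    (hlmin : ∀ e < l, ∀ n : ℕ, 1 < n → ¬ p ∣ n → b (n * p ^ e) = 0) :
    (∀ k < l, ∀ m : ℕ, 1 ≤ m → ¬ p ∣ m → ∀ a a' : K, ‖a‖ < r → ‖a'‖ < r →
      (∑' j : ℕ, ((m * p ^ k + j).choose (m * p ^ k) : K) * b (m * p ^ k + j) * a ^ j) =
        (∑' j : ℕ, ((m * p ^ k + j).choose (m * p ^ k) : K) * b (m * p ^ k + j) * a' ^ j)) ∧
    (∀ W : Set K, IsOpen W → (0 : K) ∈ W →
      {t : K | ∃ a : K, a ∈ W ∧ ‖a‖ < r ∧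
        t = ∑' j : ℕ, ((p ^ l + j).choose (p ^ l) : K) * b (p ^ l + j) * a ^ j}.Infinite) :=
  stmt19_general p b r hr hconv l hlmem hlmin
end
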